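/- The limit as n → ∞ of the ratio (C_{n-3}⁴·(n-5)²) / (C_n⁴·(n+1)²) equals 1/2²⁴ (and in particular is positive). Here the numerator counts the pairs (u,v) of cyclically marked tree pair diagrams of size n of the special ping-pong form generating a free subgroup of rank 2 in Thompson's group T, and the denominator counts all pairs of cyclically marked tree pair diagrams of size n. -/

import Mathlib

/-!
Since `C_{n+1} / C_n = 2(2n+1)/(n+2) → 4`, telescoping gives `C_{n-3} / C_n → 4⁻³`, while
`(n-5)/(n+1) → 1`; the ratio is `(C_{n-3}/C_n)⁴ · ((n-5)/(n+1))²`, so it tends to `4⁻¹² = 2⁻²⁴`.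
-/

open Filter Topology

lemma catalan_pos (n : ℕ) : 0 < catalan n :=
  Nat.pos_of_ne_zero fun h => Nat.centralBinom_ne_zero n <| by
    rw [← succ_mul_catalan_eq_centralBinom, h, mul_zero]

lemma succ_succ_mul_catalan_succ (n : ℕ) :
    (n + 2) * catalan (n + 1) = 2 * (2 * n + 1) * catalan n := by
  apply Nat.eq_of_mul_eq_mul_left n.succ_pos
  calc (n + 1) * ((n + 2) * catalan (n + 1))
      = (n + 1) * (n + 1).centralBinom := by rw [← succ_mul_catalan_eq_centralBinom]
    _ = (n + 1) * (2 * (2 * n + 1) * catalan n) := by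
      rw [Nat.succ_mul_centralBinom_succ, ← succ_mul_catalan_eq_centralBinom]; ring

lemma catalan_succ_div_catalan (n : ℕ) :
    (catalan (n + 1) : ℝ) / catalan n = 4 - 6 / ((n : ℝ) + 2) := by
  have h : ((n : ℝ) + 2) * catalan (n + 1) = 2 * (2 * n + 1) * catalan n := by
    exact_mod_cast succ_succ_mul_catalan_succ n
  have hC : (catalan n : ℝ) ≠ 0 := by exact_mod_cast (catalan_pos n).ne'
  rw [div_eq_iff hC, ← mul_right_inj' (by positivity : (n : ℝ) + 2 ≠ 0), h]
  field_simp
  ring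

lemma tendsto_catalan_succ_div_catalan :
    Tendsto (fun n : ℕ => (catalan (n + 1) : ℝ) / catalan n) atTop (𝓝 4) := by
  have h : Tendsto (fun n : ℕ => 4 - 6 / ((n : ℝ) + 2)) atTop (𝓝 (4 - 0)) :=
    tendsto_const_nhds.sub <| tendsto_const_nhds.div_atTop <|
      tendsto_atTop_add_const_right _ 2 tendsto_natCast_atTop_atTop
  simpa only [sub_zero, catalan_succ_div_catalan] using h

lemma tendsto_div_of_tendsto_succ_div {a : ℕ → ℝ} {L : ℝ} (ha : ∀ n, a n ≠ 0)
    (h : Tendsto (fun n => a (n + 1) / a n) atTop (𝓝 L)) (hL : L ≠ 0) (k : ℕ) :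
    Tendsto (fun n => a (n - k) / a n) atTop (𝓝 (L ^ k)⁻¹) := by
  induction k with
  | zero => simp [ha]
  | succ k ih =>
    have hstep := (h.comp (tendsto_sub_atTop_nat (k + 1))).inv₀ hL
    rw [pow_succ', mul_inv]
    refine (hstep.mul ih).congr' ?_
    filter_upwards [eventually_ge_atTop (k + 1)] with n hn
    have hsub : n - (k + 1) + 1 = n - k := by omega
    simp only [Function.comp_apply, hsub, inv_div]
    rw [div_mul_div_cancel₀ (ha _)]

lemma tendsto_natCast_sub_div_add (k : ℕ) (c : ℝ) :
    Tendsto (fun n : ℕ => ((n - k : ℕ) : ℝ) / (n + c)) atTop (𝓝 1) := by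
  refine ((tendsto_natCast_div_add_atTop ((k : ℝ) + c)).comp (tendsto_sub_atTop_nat k)).congr' ?_
  filter_upwards [eventually_ge_atTop k] with n hn
  simp only [Function.comp_apply, Nat.cast_sub hn]
  ring_nf

/-- The fraction of ping-pong pairs generating a free subgroup of rank 2 in
Thompson's group `T`, namely `C_{n-3}⁴·(n-5)²` out of all `C_n⁴·(n+1)²` pairs of
cyclically marked tree pair diagrams of size `n`, tends to `1/2²⁴`. -/
theorem density_free_T :
    Filter.Tendsto
      (fun n : ℕ => ((catalan (n - 3) ^ 4 * (n - 5) ^ 2 : ℕ) : ℝ) /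
        ((catalan n ^ 4 * (n + 1) ^ 2 : ℕ) : ℝ))
      Filter.atTop (nhds (1 / 2 ^ 24)) := by
  have hcatalan : ∀ n, (catalan n : ℝ) ≠ 0 := fun n => by exact_mod_cast (catalan_pos n).ne'
  have hC := (tendsto_div_of_tendsto_succ_div hcatalan tendsto_catalan_succ_div_catalan
    four_ne_zero 3).pow 4
  have hN := (tendsto_natCast_sub_div_add 5 1).pow 2
  convert hC.mul hN using 1
  · funext n
    push_cast
    rw [div_pow, div_pow, div_mul_div_comm]
  · norm_num
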